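/- In the Setup, assume additionally that A and A* satisfy the cubic q-Serre relations. Let W be a nonzero subspace of V with AW ⊆ W and A*W ⊆ W, such that the only subspaces W' ⊆ W with AW' ⊆ W' and A*W' ⊆ W' are 0 and W. Let r = min{i : 0 ≤ i ≤ d, E_iW ≠ 0}. Then for every v ∈ E_rW, the vector u := F_r v satisfies Lu = 0. -/

import Mathlib

noncomputable section

/-- `[n]_q = (qⁿ − q⁻ⁿ)/(q − q⁻¹)`. -/
def qInt {K : Type*} [Field K] (q : K) (n : ℕ) : K :=
  (q ^ n - q⁻¹ ^ n) / (q - q⁻¹)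

/-- `[n]_q! = [n]_q [n−1]_q ⋯ [1]_q`. -/
def qFac {K : Type*} [Field K] (q : K) (n : ℕ) : K :=
  ∏ k ∈ Finset.range n, qInt q (k + 1)

/-- `X, Y` satisfy the cubic `q`-Serre relations. -/
def QSerre {K V : Type*} [Field K] [AddCommGroup V] [Module K V]
    (q : K) (X Y : Module.End K V) : Prop :=
  X ^ 3 * Y - qInt q 3 • (X ^ 2 * Y * X) + qInt q 3 • (X * Y * X ^ 2) - Y * X ^ 3 = 0 ∧
  Y ^ 3 * X - qInt q 3 • (Y ^ 2 * X * Y) + qInt q 3 • (Y * X * Y ^ 2) - X * Y ^ 3 = 0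

/-- `U 0, …, U d` is a decomposition of `V` with diameter `d`: the `U i` with `i ≤ d` are nonzero,
`U i = 0` for `i > d`, and `V` is the (internal) direct sum of the `U i`. -/
def IsDecomposition {K V : Type*} [Field K] [AddCommGroup V] [Module K V]
    (d : ℕ) (U : ℕ → Submodule K V) : Prop :=
  (∀ i, i ≤ d → U i ≠ ⊥) ∧ (∀ i, d < i → U i = ⊥) ∧
  (⨆ i, U i) = ⊤ ∧
  ∀ i, Disjoint (U i) (⨆ j, ⨆ _ : j ≠ i, U j)

/-- The Setup: `U 0, …, U d` is a decomposition of `V`; `R` is a raising map, `L` a lowering map,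
and `A` (resp. `As`) acts on `U i` as `R + q^{2i−d}` (resp. `L + q^{d−2i}`). -/
def TDSetup {K V : Type*} [Field K] [AddCommGroup V] [Module K V]
    (q : K) (d : ℕ) (U : ℕ → Submodule K V) (R L A As : Module.End K V) : Prop :=
  IsDecomposition d U ∧
  (∀ i, Submodule.map R (U i) ≤ U (i + 1)) ∧
  (∀ i, Submodule.map L (U (i + 1)) ≤ U i) ∧
  (∀ u ∈ U 0, L u = 0) ∧
  (∀ i, ∀ u ∈ U i, A u = R u + q ^ (2 * (i : ℤ) - d) • u) ∧
  (∀ i, ∀ u ∈ U i, As u = L u + q ^ ((d : ℤ) - 2 * (i : ℤ)) • u)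

/-- `E i` is, for each `i`, the projection onto `P i` determined by the decomposition of `V` into
the subspaces `P j`: it is the identity on `P i` and zero on each `P j` with `j ≠ i`. -/
def IsProjFamily {K V : Type*} [Field K] [AddCommGroup V] [Module K V]
    (P : ℕ → Submodule K V) (E : ℕ → Module.End K V) : Prop :=
  ∀ i, (∀ v ∈ P i, E i v = v) ∧ ∀ j, j ≠ i → ∀ v ∈ P j, E i v = 0

/-!
`A - q^{2k-d}` maps `U k ⊕ U (k+1) ⊕ ⋯` into `U (k+1) ⊕ U (k+2) ⊕ ⋯`. As the `q^{2i-d}` are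
pairwise distinct, `A` is therefore diagonalizable and its `q^{2j-d}`-eigenvectors lie in
`U j ⊕ U (j+1) ⊕ ⋯`. Since `E i W = 0` for `i < r`, every `w ∈ W` lies in `U r ⊕ U (r+1) ⊕ ⋯` and
`w - E r w` in `U (r+1) ⊕ ⋯`, so `F r (E r w) = F r w`. Finally `As w ∈ W` has no component in
`U (r-1)`, and that component is `L (F r w)`.
-/

open Polynomial

theorem zpow_injective_of_pow_ne_one {K : Type*} [Field K] {q : K} (hq : q ≠ 0)
    (hq1 : ∀ n : ℕ, 0 < n → q ^ n ≠ 1) : Function.Injective fun n : ℤ => q ^ n := by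
  have hu : ¬IsOfFinOrder (Units.mk0 q hq) := by
    rw [isOfFinOrder_iff_pow_eq_one]
    rintro ⟨n, hn, h⟩
    exact hq1 n hn (by simpa [Units.ext_iff] using h)
  exact fun m n h => injective_zpow_iff_not_isOfFinOrder.mpr hu (Units.ext (by simpa using h))

theorem LinearMap.ext_of_iSup_eq_top {R M M' ι : Type*} [Semiring R] [AddCommMonoid M]
    [Module R M] [AddCommMonoid M'] [Module R M'] {P : ι → Submodule R M}
    (hP : ⨆ i, P i = ⊤) {f g : M →ₗ[R] M'} (h : ∀ i, ∀ v ∈ P i, f v = g v) : f = g :=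
  LinearMap.ext_on (s := ⋃ i, (P i : Set M)) (by rw [← Submodule.iSup_eq_span, hP])
    fun _ hv => by obtain ⟨i, hi⟩ := Set.mem_iUnion.mp hv; exact h i _ hi

theorem Module.End.iSup_eigenspace_eq_ker_aeval_prod {K V ι : Type*} [Field K] [AddCommGroup V]
    [Module K V] [DecidableEq ι] (f : Module.End K V) (μ : ι → K) (s : Finset ι)
    (hμ : Set.InjOn μ s) :
    ⨆ i ∈ s, f.eigenspace (μ i) = LinearMap.ker (aeval f (∏ i ∈ s, (X - C (μ i)))) := by
  induction s using Finset.induction_on with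
  | empty => simp [Module.End.one_eq_id]
  | insert a s ha ih =>
    have hcop : IsCoprime (X - C (μ a)) (∏ i ∈ s, (X - C (μ i))) :=
      IsCoprime.prod_right fun i hi => isCoprime_X_sub_C_of_isUnit_sub <| IsUnit.mk0 _ <|
        sub_ne_zero.mpr fun h => ha (hμ (by simp) (by simp [hi]) h ▸ hi)
    rw [Finset.iSup_insert, Finset.prod_insert ha,
      ← sup_ker_aeval_eq_ker_aeval_mul_of_coprime _ hcop,
      ih (hμ.mono (by simp)), eigenspace_def]
    simp [Algebra.algebraMap_eq_smul_one]

section ProjFamily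

variable {K V : Type*} [Field K] [AddCommGroup V] [Module K V]
  {P : ℕ → Submodule K V} {E : ℕ → Module.End K V}

theorem IsProjFamily.apply_of_mem (hE : IsProjFamily P E) {j : ℕ} {u : V} (hu : u ∈ P j)
    (i : ℕ) : E i u = if i = j then u else 0 := by
  split_ifs with h
  · exact (hE i).1 u (h ▸ hu)
  · exact (hE i).2 j (Ne.symm h) u hu

theorem IsProjFamily.apply_mem (hE : IsProjFamily P E) (hP : ⨆ i, P i = ⊤) (i : ℕ) (v : V) :
    E i v ∈ P i := by
  have hv : v ∈ ⨆ j, P j := hP ▸ Submodule.mem_top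
  refine Submodule.iSup_induction P (motive := fun v => E i v ∈ P i) hv ?_ (by simp) ?_
  · intro j u hu
    rw [hE.apply_of_mem hu]
    split_ifs with h <;> simp [h, hu]
  · intro x y hx hy
    rw [map_add]
    exact add_mem hx hy

theorem IsProjFamily.sub_sum_mem (hE : IsProjFamily P E) (hP : ⨆ i, P i = ⊤)
    {G : Submodule K V} {k : ℕ} (hG : ∀ j, k ≤ j → P j ≤ G) (v : V) :
    v - ∑ j ∈ Finset.range k, E j v ∈ G := by
  have hv : v ∈ ⨆ j, P j := hP ▸ Submodule.mem_top
  refine Submodule.iSup_induction P (motive := fun v => v - ∑ j ∈ Finset.range k, E j v ∈ G)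
    hv ?_ (by simp) ?_
  · intro j u hu
    simp only [hE.apply_of_mem hu, Finset.sum_ite_eq', Finset.mem_range]
    split_ifs with h
    · simp
    · simpa using hG j (not_lt.mp h) hu
  · intro x y hx hy
    simpa only [map_add, Finset.sum_add_distrib, add_sub_add_comm] using add_mem hx hy

end ProjFamily

section KerBelow

variable {K V : Type*} [Field K] [AddCommGroup V] [Module K V] (F : ℕ → Module.End K V)

/-- When `F` is the projection family of a decomposition `U`, this is `U k ⊕ U (k+1) ⊕ ⋯`. -/
def kerBelow (k : ℕ) : Submodule K V :=
  ⨅ m, ⨅ (_ : m < k), LinearMap.ker (F m)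

variable {F}

theorem mem_kerBelow {k : ℕ} {v : V} : v ∈ kerBelow F k ↔ ∀ m < k, F m v = 0 := by
  simp [kerBelow]

theorem mem_kerBelow_succ {k : ℕ} {v : V} :
    v ∈ kerBelow F (k + 1) ↔ v ∈ kerBelow F k ∧ F k v = 0 := by
  simp only [mem_kerBelow, Nat.forall_lt_succ_right]

theorem kerBelow_antitone : Antitone (kerBelow F) :=
  fun _ _ hkl _ hv => mem_kerBelow.mpr fun m hm => mem_kerBelow.mp hv m (hm.trans_le hkl)

theorem IsProjFamily.kerBelow_eq_bot {U : ℕ → Submodule K V} (hF : IsProjFamily U F)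
    (hUtop : ⨆ i, U i = ⊤) {d : ℕ} (hUbot : ∀ i, d < i → U i = ⊥) : kerBelow F (d + 1) = ⊥ := by
  refine eq_bot_iff.mpr fun v hv => ?_
  have h := hF.sub_sum_mem hUtop (G := ⊥) (k := d + 1) (fun j hj => (hUbot j hj).le) v
  rwa [Finset.sum_eq_zero fun m hm => mem_kerBelow.mp hv m (Finset.mem_range.mp hm),
    sub_zero] at h

end KerBelow

section Raising

variable {K V : Type*} [Field K] [AddCommGroup V] [Module K V]
  {U : ℕ → Submodule K V} {F : ℕ → Module.End K V} {R A : Module.End K V} {lam : ℕ → K}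
  (hUtop : ⨆ i, U i = ⊤) (hF : IsProjFamily U F) (hR : ∀ i, Submodule.map R (U i) ≤ U (i + 1))
  (hA : ∀ i, ∀ u ∈ U i, A u = R u + lam i • u)
include hUtop hF hR hA

theorem proj_zero_apply_raising (v : V) : F 0 (A v) = lam 0 • F 0 v := by
  refine LinearMap.congr_fun (f := F 0 ∘ₗ A) (g := lam 0 • F 0)
    (LinearMap.ext_of_iSup_eq_top hUtop fun j u hu => ?_) v
  have hRu := hR j (Submodule.mem_map_of_mem hu)
  simp only [LinearMap.comp_apply, LinearMap.smul_apply, hA j u hu, map_add, map_smul,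
    hF.apply_of_mem hu, hF.apply_of_mem hRu]
  split_ifs <;> simp_all

theorem proj_succ_apply_raising (m : ℕ) (v : V) :
    F (m + 1) (A v) = lam (m + 1) • F (m + 1) v + R (F m v) := by
  refine LinearMap.congr_fun (f := F (m + 1) ∘ₗ A) (g := lam (m + 1) • F (m + 1) + R ∘ₗ F m)
    (LinearMap.ext_of_iSup_eq_top hUtop fun j u hu => ?_) v
  have hRu := hR j (Submodule.mem_map_of_mem hu)
  simp only [LinearMap.comp_apply, LinearMap.add_apply, LinearMap.smul_apply, hA j u hu, map_add,
    map_smul, hF.apply_of_mem hu, hF.apply_of_mem hRu]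
  split_ifs <;> simp_all

theorem proj_apply_raising_of_mem_kerBelow {m : ℕ} {v : V} (hv : v ∈ kerBelow F m) :
    F m (A v) = lam m • F m v := by
  cases m with
  | zero => exact proj_zero_apply_raising hUtop hF hR hA v
  | succ m =>
    rw [proj_succ_apply_raising hUtop hF hR hA, mem_kerBelow.mp hv m m.lt_succ_self, map_zero,
      add_zero]

theorem sub_smul_mem_kerBelow_succ {k : ℕ} {v : V} (hv : v ∈ kerBelow F k) :
    A v - lam k • v ∈ kerBelow F (k + 1) := by
  refine mem_kerBelow.mpr fun m hm => ?_
  have hmk := Nat.lt_succ_iff.mp hm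
  rw [map_sub, map_smul, proj_apply_raising_of_mem_kerBelow hUtop hF hR hA
    (kerBelow_antitone hmk hv)]
  rcases hmk.lt_or_eq with h | rfl
  · simp [mem_kerBelow.mp hv m h]
  · exact sub_self _

theorem aeval_prod_mem_kerBelow (n : ℕ) (v : V) :
    aeval A (∏ i ∈ Finset.range n, (X - C (lam i))) v ∈ kerBelow F n := by
  induction n with
  | zero => simp [mem_kerBelow]
  | succ n ih =>
    rw [Finset.prod_range_succ, mul_comm, map_mul, Module.End.mul_apply]
    simpa [Algebra.algebraMap_eq_smul_one] using sub_smul_mem_kerBelow_succ hUtop hF hR hA ih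

theorem eigenspace_le_kerBelow (hlam : Function.Injective lam) (j : ℕ) :
    A.eigenspace (lam j) ≤ kerBelow F j := by
  intro v hv
  rw [Module.End.mem_eigenspace_iff] at hv
  suffices h : ∀ m ≤ j, v ∈ kerBelow F m from h j le_rfl
  intro m
  induction m with
  | zero => simp [mem_kerBelow]
  | succ m ih =>
    intro hm
    have hvm := ih (by omega)
    have h := proj_apply_raising_of_mem_kerBelow hUtop hF hR hA hvm
    rw [hv, map_smul, ← sub_eq_zero, ← sub_smul] at h
    exact mem_kerBelow_succ.mpr
      ⟨hvm, (smul_eq_zero.mp h).resolve_left (sub_ne_zero.mpr (hlam.ne (by omega)))⟩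

theorem iSup_eigenspace_eq_top {d : ℕ} (hUbot : ∀ i, d < i → U i = ⊥)
    (hlam : Function.Injective lam) : ⨆ i, A.eigenspace (lam i) = ⊤ := by
  have hker : LinearMap.ker (aeval A (∏ i ∈ Finset.range (d + 1), (X - C (lam i)))) = ⊤ := by
    refine eq_top_iff.mpr fun v _ => ?_
    rw [LinearMap.mem_ker, ← Submodule.mem_bot K, ← hF.kerBelow_eq_bot hUtop hUbot]
    exact aeval_prod_mem_kerBelow hUtop hF hR hA _ v
  rw [← Module.End.iSup_eigenspace_eq_ker_aeval_prod _ _ _ hlam.injOn] at hker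
  exact top_unique (hker.ge.trans (iSup₂_le_iSup _ _))

end Raising

theorem proj_apply_lowering {K V : Type*} [Field K] [AddCommGroup V] [Module K V]
    {U : ℕ → Submodule K V} {F : ℕ → Module.End K V} {L As : Module.End K V} {mu : ℕ → K}
    (hUtop : ⨆ i, U i = ⊤) (hF : IsProjFamily U F) (hL : ∀ i, Submodule.map L (U (i + 1)) ≤ U i)
    (hL0 : ∀ u ∈ U 0, L u = 0) (hAs : ∀ i, ∀ u ∈ U i, As u = L u + mu i • u) (m : ℕ) (v : V) :
    F m (As v) = mu m • F m v + L (F (m + 1) v) := by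
  refine LinearMap.congr_fun (f := F m ∘ₗ As) (g := mu m • F m + L ∘ₗ F (m + 1))
    (LinearMap.ext_of_iSup_eq_top hUtop fun j u hu => ?_) v
  simp only [LinearMap.comp_apply, LinearMap.add_apply, LinearMap.smul_apply, hAs j u hu, map_add,
    map_smul, hF.apply_of_mem hu]
  cases j with
  | zero => split_ifs <;> simp_all
  | succ j =>
    rw [hF.apply_of_mem (hL j (Submodule.mem_map_of_mem hu))]
    split_ifs <;> simp_all

theorem statement11_general {K : Type*} [Field K]
    (q : K) (hq : q ≠ 0) (hq1 : ∀ n : ℕ, 0 < n → q ^ n ≠ 1)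
    {V : Type*} [AddCommGroup V] [Module K V]
    (d : ℕ) (U : ℕ → Submodule K V) (R L A As : Module.End K V)
    (hsetup : TDSetup q d U R L A As)
    (E F : ℕ → Module.End K V)
    (hE : IsProjFamily (fun i => Module.End.eigenspace A (q ^ (2 * (i : ℤ) - d))) E)
    (hF : IsProjFamily U F)
    (W : Submodule K V)
    (hWAs : Submodule.map As W ≤ W)
    (r : ℕ)
    (hrmin : ∀ i, i < r → Submodule.map (E i) W = ⊥) :
    ∀ v ∈ Submodule.map (E r) W, L (F r v) = 0 := by
  obtain ⟨⟨-, hUbot, hUtop, -⟩, hR, hL, hL0, hA, hAs⟩ := hsetup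
  have hlam : Function.Injective fun i : ℕ => q ^ (2 * (i : ℤ) - d) :=
    (zpow_injective_of_pow_ne_one hq hq1).comp fun i j h => by simpa using h
  have hsplit (k : ℕ) (v : V) : v - ∑ i ∈ Finset.range k, E i v ∈ kerBelow F k :=
    hE.sub_sum_mem (iSup_eigenspace_eq_top hUtop hF hR hA hUbot hlam)
      (fun j hj => (eigenspace_le_kerBelow hUtop hF hR hA hlam j).trans (kerBelow_antitone hj)) v
  have hEW (i : ℕ) (hi : i < r) (x : V) (hx : x ∈ W) : E i x = 0 :=
    (Submodule.eq_bot_iff _).mp (hrmin i hi) _ (Submodule.mem_map_of_mem hx)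
  have hWbelow (x : V) (hx : x ∈ W) : x ∈ kerBelow F r := by
    simpa [Finset.sum_eq_zero fun i hi => hEW i (Finset.mem_range.mp hi) x hx] using hsplit r x
  rintro _ ⟨w, hw, rfl⟩
  have hFr : F r (E r w) = F r w := by
    have h := mem_kerBelow.mp (hsplit (r + 1) w) r r.lt_succ_self
    rwa [Finset.sum_range_succ, Finset.sum_eq_zero fun i hi => hEW i (Finset.mem_range.mp hi) w hw,
      zero_add, map_sub, sub_eq_zero, eq_comm] at h
  cases r with
  | zero => exact hL0 _ (hF.apply_mem hUtop 0 _)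
  | succ s =>
    have h := proj_apply_lowering hUtop hF hL hL0 hAs s w
    rwa [mem_kerBelow.mp (hWbelow _ (hWAs (Submodule.mem_map_of_mem hw))) s s.lt_succ_self,
      mem_kerBelow.mp (hWbelow w hw) s s.lt_succ_self, smul_zero, zero_add, ← hFr, eq_comm] at h

/-- Lemma 11.3: with `r` the minimal index with `E_r W ≠ 0`, for every
`v ∈ E_r W` the vector `u = F_r v` satisfies `L u = 0`. -/
theorem statement11 {K : Type*} [Field K] [IsAlgClosed K] [CharZero K]
    (q : K) (hq : q ≠ 0) (hq1 : ∀ n : ℕ, 0 < n → q ^ n ≠ 1)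
    {V : Type*} [AddCommGroup V] [Module K V] [FiniteDimensional K V]
    (d : ℕ) (U : ℕ → Submodule K V) (R L A As : Module.End K V)
    (hsetup : TDSetup q d U R L A As)
    (hserre : QSerre q A As)
    (E F : ℕ → Module.End K V)
    (hE : IsProjFamily (fun i => Module.End.eigenspace A (q ^ (2 * (i : ℤ) - d))) E)
    (hF : IsProjFamily U F)
    (W : Submodule K V) (hW0 : W ≠ ⊥)
    (hWA : Submodule.map A W ≤ W) (hWAs : Submodule.map As W ≤ W)
    (hWirr : ∀ W' : Submodule K V, W' ≤ W → Submodule.map A W' ≤ W' →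
      Submodule.map As W' ≤ W' → W' = ⊥ ∨ W' = W)
    (r : ℕ) (hr : Submodule.map (E r) W ≠ ⊥)
    (hrmin : ∀ i, i < r → Submodule.map (E i) W = ⊥) :
    ∀ v ∈ Submodule.map (E r) W, L (F r v) = 0 :=
  statement11_general q hq hq1 d U R L A As hsetup E F hE hF W hWAs r hrmin
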